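/- arXiv:math/9803137 — 2 statements merged into one kernel-verified Lean document; each statement's English description precedes it below -/
import Mathlib

section
/- Let m be odd and let V = V_0 ⊕ ⋯ ⊕ V_m, W = W_0 ⊕ ⋯ ⊕ W_m be finite-dimensional graded vector spaces with α_m(V) = α_m(W) = 0 in Z/2Z. Define the dual graded space V' by V'_q = (V_{m-q})^*. Then M(V',W') ≡ M(W,V) (mod 2), where M(V,W) = Σ_{q=1}^m α_{q-1}(V)·α_q(W) and α_q(V) = Σ_{j=0}^q dim V_j mod 2. -/
open Finset

/-- Mod-2 partial sum of dimensions: `α_q(V) = Σ_{j=0}^q dim V_j (mod 2)`. -/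
def alphaSgn (v : ℕ → ℕ) (q : ℕ) : ZMod 2 := ((∑ j ∈ range (q + 1), v j : ℕ) : ZMod 2)

/-- `M(V,W) = Σ_{q=1}^m α_{q-1}(V) α_q(W) (mod 2)`. -/
def MSgn (v w : ℕ → ℕ) (m : ℕ) : ZMod 2 :=
  ∑ q ∈ Icc 1 m, alphaSgn v (q - 1) * alphaSgn w q

/-- Mod-2 partial sum `S v k = Σ_{j<k} v j`. -/
def Ssgn (v : ℕ → ℕ) (k : ℕ) : ZMod 2 := ((∑ j ∈ range k, v j : ℕ) : ZMod 2)

lemma alpha_eq_S (v : ℕ → ℕ) (q : ℕ) : alphaSgn v q = Ssgn v (q + 1) := rfl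

lemma dual_alpha (v : ℕ → ℕ) (m q : ℕ) (hq : q ≤ m) :
    alphaSgn (fun j => v (m - j)) q = Ssgn v (m + 1) - Ssgn v (m - q) := by
  have hnat : (∑ j ∈ range (m - q), v j) + (∑ j ∈ range (q + 1), v (m - j))
      = ∑ j ∈ range (m + 1), v j := by
    have h1 : ∑ j ∈ range (q + 1), v (m - j)
        = ∑ j ∈ range (q + 1), v ((m - q) + j) := by
      rw [← Finset.sum_range_reflect]
      refine Finset.sum_congr rfl fun j hj => ?_
      rw [Finset.mem_range] at hj
      congr 1
      omega
    have h2 := Finset.sum_range_add v (m - q) (q + 1)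
    rw [h1, show m + 1 = (m - q) + (q + 1) by omega, h2]
  have hz := congrArg (Nat.cast : ℕ → ZMod 2) hnat
  push_cast at hz
  unfold alphaSgn Ssgn
  push_cast
  linear_combination hz

/-- for odd `m`, with `dim V'_q = dim V_{m-q}` (the dual graded space) and
`α_m(V) = α_m(W) = 0`, one has `M(V',W') ≡ M(W,V) (mod 2)`. -/
theorem statement2 (m : ℕ) (hm : Odd m) (v w : ℕ → ℕ)
    (hv : alphaSgn v m = 0) (hw : alphaSgn w m = 0) :
    MSgn (fun q => v (m - q)) (fun q => w (m - q)) m = MSgn w v m := by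
  have hv' : Ssgn v (m + 1) = 0 := hv
  have hw' : Ssgn w (m + 1) = 0 := hw
  have L : MSgn (fun q => v (m - q)) (fun q => w (m - q)) m
      = ∑ q ∈ range m, Ssgn v (q + 1) * Ssgn w q := by
    unfold MSgn
    rw [← Finset.Ico_add_one_right_eq_Icc, Finset.sum_Ico_eq_sum_range]
    rw [← Finset.sum_range_reflect (fun q => Ssgn v (q + 1) * Ssgn w q) m]
    have hmr : m + 1 - 1 = m := by omega
    rw [hmr]
    refine Finset.sum_congr rfl fun i hi => ?_
    rw [Finset.mem_range] at hi
    have h1 : 1 + i - 1 = i := by omega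
    rw [h1]
    rw [dual_alpha v m i (by omega), dual_alpha w m (1 + i) (by omega), hv', hw']
    have e1 : m - 1 - i + 1 = m - i := by omega
    have e2 : m - (1 + i) = m - 1 - i := by omega
    rw [e1, e2]
    ring
  have R : MSgn w v m = ∑ q ∈ range m, Ssgn w (q + 1) * Ssgn v (q + 2) := by
    unfold MSgn
    rw [← Finset.Ico_add_one_right_eq_Icc, Finset.sum_Ico_eq_sum_range]
    have hmr : m + 1 - 1 = m := by omega
    rw [hmr]
    refine Finset.sum_congr rfl fun i hi => ?_
    have h1 : 1 + i - 1 = i := by omega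
    rw [h1, alpha_eq_S, alpha_eq_S]
    congr 2
    omega
  obtain ⟨n, rfl⟩ : ∃ n, m = n + 1 := ⟨m - 1, by have := hm.pos; omega⟩
  rw [L, R, Finset.sum_range_succ', Finset.sum_range_succ]
  have hS0 : Ssgn w 0 = 0 := by simp [Ssgn]
  have hv2 : Ssgn v (n + 1 + 1) = 0 := hv'
  rw [hS0, hv2, mul_zero, add_zero, mul_zero, add_zero]
  exact Finset.sum_congr rfl fun i _ => mul_comm _ _
end

section
/- Let m be odd and let V, W be finite-dimensional graded vector spaces of length m with α_m(V) = α_m(W) = 0 in Z/2Z. With s(V) = Σ_{q=1}^m α_{q-1}(V)α_q(V) + Σ_{q=0}^{(m-1)/2} α_{2q}(V) (mod 2), one has M(V,W) + M(W,V) ≡ s(V⊕W) + s(V) + s(W) (mod 2). -/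
open Finset

/-- `s(V) = Σ_{q=1}^m α_{q-1}(V) α_q(V) + Σ_{q=0}^{(m-1)/2} α_{2q}(V) (mod 2)`. -/
def sSgn (v : ℕ → ℕ) (m : ℕ) : ZMod 2 :=
  (∑ q ∈ Icc 1 m, alphaSgn v (q - 1) * alphaSgn v q)
  + ∑ q ∈ range ((m - 1) / 2 + 1), alphaSgn v (2 * q)

/-- for odd `m` and `α_m(V) = α_m(W) = 0`,
`M(V,W) + M(W,V) ≡ s(V⊕W) + s(V) + s(W) (mod 2)`. -/
theorem statement3 (m : ℕ) (hm : Odd m) (v w : ℕ → ℕ)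
    (hv : alphaSgn v m = 0) (hw : alphaSgn w m = 0) :
    MSgn v w m + MSgn w v m
      = sSgn (fun q => v q + w q) m + sSgn v m + sSgn w m := by
  have key : ∀ q, alphaSgn (fun q => v q + w q) q = alphaSgn v q + alphaSgn w q := by
    intro q
    simp [alphaSgn, Finset.sum_add_distrib]
  simp only [MSgn, sSgn, key, add_mul, mul_add, Finset.sum_add_distrib]
  abel_nf
  have h2 : (2 : ZMod 2) = 0 := rfl
  simp [two_nsmul, CharTwo.add_self_eq_zero, h2]
end
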